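/- Let ψ, Ψ : ℝ → ℝ be C², let λ ≠ 0, μ ∈ ℝ, t ∈ ℝ, and let ξ, ξ₁ ∈ ℝ³ be orthonormal (unit vectors with ξ·ξ₁ = 0). Define u : ℝ³ → ℝ³ by u(x) = λ⁻² ψ(λ(ξ₁·x + μt)) Ψ(λ(ξ·x)) ξ₁. Then for every x ∈ ℝ³, curl(curl u)(x) = ψ(λ(ξ₁·x + μt)) · (−Ψ″(λ(ξ·x))) · ξ₁ + ψ′(λ(ξ₁·x + μt)) · Ψ′(λ(ξ·x)) · ξ. In particular, with φ := −Ψ″, the intermittent building block ψφξ₁ plus an explicit corrector is a double curl, hence divergence-free. -/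

import Mathlib

/-!
For a constant vector `v`, `curl (φ v) = ∇φ × v`. The gradient of the block
`λ⁻² ψ(λ(ξ₁·x + μt)) Ψ(λ ξ·x)` is `λ⁻¹ (ψ′Ψ ξ₁ + ψΨ′ ξ)`, so crossing with `ξ₁` leaves
`curl u = λ⁻¹ ψΨ′ (ξ × ξ₁)`, again a scalar multiple of a constant vector. Its gradient is
`ψ′Ψ′ ξ₁ + ψΨ″ ξ`, and the triple product expansion with `(ξ, ξ₁)` orthonormal gives
`ξ₁ × (ξ × ξ₁) = ξ` and `ξ × (ξ × ξ₁) = -ξ₁`.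
-/

/-- Partial derivative in the `i`-th coordinate direction of a scalar field on `ℝ³`. -/
noncomputable def pderiv3 (i : Fin 3) (f : (Fin 3 → ℝ) → ℝ) (x : Fin 3 → ℝ) : ℝ :=
  fderiv ℝ f x (Pi.single i 1)

/-- Curl of a vector field on `ℝ³`. -/
noncomputable def vcurl (F : (Fin 3 → ℝ) → Fin 3 → ℝ) (x : Fin 3 → ℝ) : Fin 3 → ℝ :=
  ![pderiv3 1 (fun y => F y 2) x - pderiv3 2 (fun y => F y 1) x,
    pderiv3 2 (fun y => F y 0) x - pderiv3 0 (fun y => F y 2) x,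
    pderiv3 0 (fun y => F y 1) x - pderiv3 1 (fun y => F y 0) x]

/-- Euclidean inner product on `ℝ³` (as `Fin 3 → ℝ`). -/
def dot3 (a b : Fin 3 → ℝ) : ℝ := ∑ i, a i * b i

open Matrix

section PlaneWave

variable {ι : Type*} [Fintype ι]

noncomputable def dotProductCLM : (ι → ℝ) →ₗ[ℝ] (ι → ℝ) →L[ℝ] ℝ :=
  LinearMap.toContinuousLinearMap.toLinearMap ∘ₗ dotProductBilin ℝ ℝ

@[simp]
theorem dotProductCLM_apply (w y : ι → ℝ) : dotProductCLM w y = w ⬝ᵥ y := rfl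

theorem hasFDerivAt_planeWave {f : ℝ → ℝ} {f' lam r : ℝ} {a x : ι → ℝ}
    (hf : HasDerivAt f f' (lam * (a ⬝ᵥ x + r))) :
    HasFDerivAt (fun y => f (lam * (a ⬝ᵥ y + r))) (dotProductCLM ((f' * lam) • a)) x := by
  have hphase := ((dotProductCLM a).hasFDerivAt (x := x)).add_const r |>.const_mul lam
  refine (hf.comp_hasFDerivAt x hphase).congr_fderiv ?_
  simp only [map_smul, smul_smul]

theorem hasFDerivAt_const_mul_planeWave_mul_planeWave {f g : ℝ → ℝ} {f' g' c lam r : ℝ}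
    {a b x : ι → ℝ}
    (hf : HasDerivAt f f' (lam * (a ⬝ᵥ x + r))) (hg : HasDerivAt g g' (lam * (b ⬝ᵥ x))) :
    HasFDerivAt (fun y => c * (f (lam * (a ⬝ᵥ y + r)) * g (lam * (b ⬝ᵥ y))))
      (dotProductCLM ((c * lam) • ((f' * g (lam * (b ⬝ᵥ x))) • a
        + (f (lam * (a ⬝ᵥ x + r)) * g') • b))) x := by
  have hg' : HasFDerivAt (fun y => g (lam * (b ⬝ᵥ y))) (dotProductCLM ((g' * lam) • b)) x := by
    simpa using hasFDerivAt_planeWave (r := 0) (by simpa using hg)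
  refine (((hasFDerivAt_planeWave hf).mul hg').const_mul c).congr_fderiv ?_
  simp only [map_smul, map_add]
  module

end PlaneWave

theorem dot3_eq_dotProduct (a b : Fin 3 → ℝ) : dot3 a b = a ⬝ᵥ b := rfl

theorem pderiv3_eq_of_hasFDerivAt {f : (Fin 3 → ℝ) → ℝ} {w x : Fin 3 → ℝ}
    (h : HasFDerivAt f (dotProductCLM w) x) (i : Fin 3) : pderiv3 i f x = w i := by
  simp [pderiv3, h.fderiv]

theorem vcurl_smul_const {φ : (Fin 3 → ℝ) → ℝ} {w x : Fin 3 → ℝ} (v : Fin 3 → ℝ)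
    (h : HasFDerivAt φ (dotProductCLM w) x) : vcurl (fun y => φ y • v) x = w ⨯₃ v := by
  have hcomp (i j : Fin 3) : pderiv3 i (fun y => φ y * v j) x = v j * w i := by
    have hj : HasFDerivAt (fun y => φ y * v j) (dotProductCLM (v j • w)) x := by
      simpa only [map_smul] using h.mul_const (v j)
    simp [pderiv3_eq_of_hasFDerivAt hj]
  ext j
  fin_cases j <;> simp [vcurl, hcomp, cross_apply] <;> ring

/-- For `u(x) = λ⁻² ψ(λ(ξ₁·x + μt)) Ψ(λ(ξ·x)) ξ₁` with `(ξ, ξ₁)` orthonormal,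
`curl(curl u)(x) = ψ(λ(ξ₁·x+μt))·(−Ψ″(λ(ξ·x)))·ξ₁ + ψ′(λ(ξ₁·x+μt))·Ψ′(λ(ξ·x))·ξ`. -/
theorem double_curl_of_intermittent_block
    (ψ Ψ : ℝ → ℝ) (hψ : ContDiff ℝ 2 ψ) (hΨ : ContDiff ℝ 2 Ψ)
    (lam μ t : ℝ) (hlam : lam ≠ 0)
    (ξ ξ₁ : Fin 3 → ℝ)
    (hξ : dot3 ξ ξ = 1) (hξ₁ : dot3 ξ₁ ξ₁ = 1) (hperp : dot3 ξ ξ₁ = 0)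
    (u : (Fin 3 → ℝ) → Fin 3 → ℝ)
    (hu : ∀ x, u x
      = (lam⁻¹ * lam⁻¹ * (ψ (lam * (dot3 ξ₁ x + μ * t)) * Ψ (lam * (dot3 ξ x)))) • ξ₁) :
    ∀ x, vcurl (vcurl u) x
      = (ψ (lam * (dot3 ξ₁ x + μ * t)) * (-(deriv (deriv Ψ) (lam * (dot3 ξ x))))) • ξ₁
        + (deriv ψ (lam * (dot3 ξ₁ x + μ * t)) * deriv Ψ (lam * (dot3 ξ x))) • ξ := by
  simp only [dot3_eq_dotProduct] at hu hξ hξ₁ hperp ⊢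
  have hψ' (z : ℝ) : HasDerivAt ψ (deriv ψ z) z :=
    (hψ.differentiable two_ne_zero z).hasDerivAt
  have hΨ' (z : ℝ) : HasDerivAt Ψ (deriv Ψ z) z :=
    (hΨ.differentiable two_ne_zero z).hasDerivAt
  have hΨ'' (z : ℝ) : HasDerivAt (deriv Ψ) (deriv (deriv Ψ) z) z :=
    ((hΨ.deriv' (n := 1)).differentiable one_ne_zero z).hasDerivAt
  have hcurl : vcurl u = fun y =>
      (lam⁻¹ * (ψ (lam * (ξ₁ ⬝ᵥ y + μ * t)) * deriv Ψ (lam * (ξ ⬝ᵥ y)))) • (ξ ⨯₃ ξ₁) := by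
    funext y
    rw [funext hu, vcurl_smul_const ξ₁
        (hasFDerivAt_const_mul_planeWave_mul_planeWave (hψ' _) (hΨ' _)),
      show lam⁻¹ * lam⁻¹ * lam = lam⁻¹ by field_simp]
    simp only [map_add, map_smul, LinearMap.add_apply, LinearMap.smul_apply, cross_self]
    module
  intro x
  rw [hcurl, vcurl_smul_const _ (hasFDerivAt_const_mul_planeWave_mul_planeWave (hψ' _) (hΨ'' _)),
    inv_mul_cancel₀ hlam]
  simp only [map_add, map_smul, LinearMap.add_apply, LinearMap.smul_apply,
    cross_cross_eq_smul_sub_smul', hξ, hξ₁, hperp]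
  module
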